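/- arXiv:2603.12297 — 6 statements merged into one kernel-verified Lean document; each statement's English description precedes it below -/
import Mathlib

section
/- Let p be a probability density on ℝ such that the function x ↦ p(x) e^{iβ p(x)} is integrable for all β > 0. Then CE_β(p) = 1 for all β > 0 if and only if p is uniform, i.e., there exist a constant c > 0 and a measurable set S ⊆ ℝ of finite Lebesgue measure with c · μ(S) = 1 such that p(x) = c · 𝟙_S(x) for Lebesgue-almost every x. -/
open MeasureTheory Real Filter

lemma re_eq_abs_imp {z : ℂ} (h : z.re = ‖z‖) : z = ((‖z‖ : ℝ) : ℂ) := by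
  have him : z.im = 0 := by
    have h2 : z.re ^ 2 + z.im ^ 2 = (‖z‖) ^ 2 := by
      rw [Complex.sq_norm, Complex.normSq_apply]; ring
    have h3 : z.im ^ 2 = 0 := by rw [← h] at h2; linarith
    exact pow_eq_zero_iff (by norm_num) |>.mp h3
  apply Complex.ext
  · simpa using h
  · simpa using him

lemma eq_case {f : ℝ → ℂ} (hf : Integrable f)
    (h : ‖∫ x, f x‖ = ∫ x, ‖f x‖) (hne : (∫ x, f x) ≠ 0) :
    ∀ᵐ x, f x = (‖f x‖ : ℂ) * ((∫ x, f x) / ‖∫ x, f x‖) := by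
  set I : ℂ := ∫ x, f x with hI
  set θ : ℂ := I / ‖I‖ with hθ
  have hIn : (0:ℝ) < ‖I‖ := norm_pos_iff.2 hne
  have habsθ : ‖θ‖ = 1 := by
    simp [hθ, map_div₀, Complex.norm_real, _root_.abs_of_pos hIn,
      div_self (ne_of_gt (norm_pos_iff.mpr hne))]
  set g : ℝ → ℝ := fun x => ‖f x‖ - ((starRingEnd ℂ) θ * f x).re with hg
  have hg_int : Integrable g := hf.norm.sub ((hf.const_mul _).re)
  have habs2 : ∀ x, ‖(starRingEnd ℂ) θ * f x‖ = ‖f x‖ := by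
    intro x
    simp [map_mul, Complex.norm_conj, habsθ]
  have hg_nonneg : ∀ x, 0 ≤ g x := by
    intro x
    have h1 : ((starRingEnd ℂ) θ * f x).re ≤ ‖(starRingEnd ℂ) θ * f x‖ :=
      Complex.re_le_norm _
    simp only [hg, sub_nonneg]
    rw [← habs2 x]; exact h1
  have hθI : (starRingEnd ℂ) θ * I = ((‖I‖ : ℝ) : ℂ) := by
    rw [hθ, map_div₀, Complex.conj_ofReal, div_mul_eq_mul_div, mul_comm, Complex.mul_conj,
      Complex.normSq_eq_norm_sq]
    rw [div_eq_iff (by exact_mod_cast ne_of_gt hIn : ((‖I‖:ℝ):ℂ) ≠ 0)]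
    push_cast; ring
  have hint_g : ∫ x, g x = 0 := by
    have h0 : ∫ x, g x = (∫ x, ‖f x‖) - ∫ x, ((starRingEnd ℂ) θ * f x).re :=
      integral_sub hf.norm ((hf.const_mul _).re)
    have h1 : ∫ x, ((starRingEnd ℂ) θ * f x).re = ((starRingEnd ℂ) θ * I).re := by
      have h2 : ∫ x, (starRingEnd ℂ) θ * f x = (starRingEnd ℂ) θ * I :=
        integral_const_mul _ _
      have := integral_re (μ := (volume : Measure ℝ)) (hf.const_mul ((starRingEnd ℂ) θ))
      rw [h2] at this
      simpa using this
    rw [h0, h1, hθI, Complex.ofReal_re, ← h]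
    simp
  have hae : ∀ᵐ x, g x = 0 := by
    exact (integral_eq_zero_iff_of_nonneg hg_nonneg hg_int).1 hint_g
  filter_upwards [hae] with x hx
  have hre' : ‖f x‖ = ((starRingEnd ℂ) θ * f x).re := sub_eq_zero.mp hx
  have hre : ((starRingEnd ℂ) θ * f x).re = ‖(starRingEnd ℂ) θ * f x‖ := by
    rw [habs2 x]; exact hre'.symm
  have h2 : (starRingEnd ℂ) θ * f x = ((‖f x‖ : ℝ) : ℂ) := by
    rw [re_eq_abs_imp hre, habs2 x]
  have hθθ : θ * (starRingEnd ℂ) θ = 1 := by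
    rw [Complex.mul_conj, Complex.normSq_eq_norm_sq, habsθ]; norm_num
  calc f x = θ * ((starRingEnd ℂ) θ * f x) := by rw [← mul_assoc, hθθ, one_mul]
    _ = (‖f x‖ : ℂ) * θ := by rw [h2]; ring



/-- The complex entropy of a probability density `p` on `ℝ` with parameter `β`. -/
noncomputable def complexEntropy (β : ℝ) (p : ℝ → ℝ) : ℝ :=
  ‖∫ x : ℝ, (p x : ℂ) * Complex.exp ((β * p x : ℝ) * Complex.I)‖

/-- Maximum condition: for a probability density `p` on `ℝ` (with the phase-modulated
integrand integrable for all `β > 0`), `CE_β(p) = 1` for all `β > 0` if and only if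
`p` is (a.e.) the uniform density `c • 𝟙_S` on some measurable set `S` of finite
Lebesgue measure, with `c > 0` and `c · μ(S) = 1`. -/
theorem complexEntropy_eq_one_iff_uniform (p : ℝ → ℝ) (hmeas : Measurable p)
    (hnonneg : ∀ x, 0 ≤ p x) (hint : ∫ x : ℝ, p x = 1)
    (hintegrable : ∀ β : ℝ, 0 < β →
      Integrable (fun x : ℝ => (p x : ℂ) * Complex.exp ((β * p x : ℝ) * Complex.I))) :
    (∀ β : ℝ, 0 < β → complexEntropy β p = 1) ↔
      ∃ (c : ℝ) (S : Set ℝ), 0 < c ∧ MeasurableSet S ∧ volume S < ⊤ ∧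
        c * (volume S).toReal = 1 ∧
        ∀ᵐ x : ℝ ∂volume, p x = S.indicator (fun _ => c) x := by
  have hnormf : ∀ (β : ℝ) (x : ℝ),
      ‖(p x : ℂ) * Complex.exp ((β * p x : ℝ) * Complex.I)‖ = p x := by
    intro β x
    rw [norm_mul, Complex.norm_exp_ofReal_mul_I,
      mul_one, Complex.norm_real, Real.norm_eq_abs, abs_of_nonneg (hnonneg x)]
  have hp_int : Integrable p := by
    have := (hintegrable 1 one_pos).norm
    exact this.congr (Eventually.of_forall fun x => hnormf 1 x)
  constructor
  · intro h
    -- Key: per β, phase is a.e. constant on {p ≠ 0}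
    have key : ∀ β : ℝ, 0 < β → ∀ᵐ x : ℝ, p x ≠ 0 →
        Complex.exp ((β * p x : ℝ) * Complex.I) =
          ∫ y : ℝ, (p y : ℂ) * Complex.exp ((β * p y : ℝ) * Complex.I) := by
      intro β hβ
      have hInorm : ‖∫ x : ℝ, (p x : ℂ) * Complex.exp ((β * p x : ℝ) * Complex.I)‖ = 1 := by
        exact h β hβ
      have hintnorm : (∫ x : ℝ, ‖(p x : ℂ) * Complex.exp ((β * p x : ℝ) * Complex.I)‖) = 1 := by
        rw [← hint]; exact integral_congr_ae (Eventually.of_forall fun x => hnormf β x)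
      have hne : (∫ x : ℝ, (p x : ℂ) * Complex.exp ((β * p x : ℝ) * Complex.I)) ≠ 0 := by
        intro h0; rw [h0] at hInorm; simp at hInorm
      have := eq_case (hintegrable β hβ) (hInorm.trans hintnorm.symm) hne
      filter_upwards [this] with x hx hpx
      rw [hnormf β x, hInorm] at hx
      have hpxC : (p x : ℂ) ≠ 0 := by exact_mod_cast hpx
      simp only [Complex.ofReal_one, div_one] at hx
      exact mul_left_cancel₀ hpxC hx
    have keyQ : ∀ᵐ x : ℝ, ∀ q : ℚ, 0 < q → p x ≠ 0 →
        Complex.exp (((q : ℝ) * p x : ℝ) * Complex.I) =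
          ∫ y : ℝ, (p y : ℂ) * Complex.exp (((q : ℝ) * p y : ℝ) * Complex.I) := by
      rw [ae_all_iff]
      intro q
      by_cases hq : 0 < q
      · have := key (q : ℝ) (by exact_mod_cast hq)
        filter_upwards [this] with x hx _ hpx
        exact hx hpx
      · filter_upwards with x hq' hpx; exact absurd hq' hq
    -- find a point where p is positive and the property holds
    have hex : ∃ x : ℝ, (∀ q : ℚ, 0 < q → p x ≠ 0 →
        Complex.exp (((q : ℝ) * p x : ℝ) * Complex.I) =
          ∫ y : ℝ, (p y : ℂ) * Complex.exp (((q : ℝ) * p y : ℝ) * Complex.I)) ∧ p x ≠ 0 := by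
      by_contra hcon
      push_neg at hcon
      have hzero : ∀ᵐ x : ℝ, p x = 0 := by
        filter_upwards [keyQ] with x hx
        by_contra hpx
        exact hpx (hcon x hx)
      have : ∫ x : ℝ, p x = 0 := by
        rw [integral_congr_ae hzero, integral_zero]
      rw [hint] at this; norm_num at this
    obtain ⟨x₀, hx₀, hpx₀⟩ := hex
    set c : ℝ := p x₀ with hc
    have hcpos : 0 < c := lt_of_le_of_ne (hnonneg x₀) (Ne.symm hpx₀)
    -- a.e., p x = 0 or p x = c
    have hdichot : ∀ᵐ x : ℝ, p x = 0 ∨ p x = c := by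
      filter_upwards [keyQ] with x hx
      by_cases hp0 : p x = 0
      · exact Or.inl hp0
      right
      -- for every positive rational q, exp(i q (p x - c)) = 1
      have hperiod : ∀ q : ℚ, 0 < q → ∃ n : ℤ, (q : ℝ) * (p x - c) = n * (2 * π) := by
        intro q hq
        have h1 := hx q hq hp0
        have h2 := hx₀ q hq hpx₀
        have h3 : Complex.exp ((((q:ℝ) * p x : ℝ) : ℂ) * Complex.I -
            (((q:ℝ) * c : ℝ) : ℂ) * Complex.I) = 1 := by
          rw [Complex.exp_sub, h1, ← h2, div_self (Complex.exp_ne_zero _)]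
        rw [Complex.exp_eq_one_iff] at h3
        obtain ⟨n, hn⟩ := h3
        refine ⟨n, ?_⟩
        have hI : ((((q:ℝ) * p x : ℝ) : ℂ) - (((q:ℝ) * c : ℝ) : ℂ)) * Complex.I =
            (n : ℂ) * (2 * π * Complex.I) := by
          rw [sub_mul]; exact hn
        have hI2 : ((((q:ℝ) * p x : ℝ) : ℂ) - (((q:ℝ) * c : ℝ) : ℂ)) =
            (n : ℂ) * (2 * π) := by
          refine mul_right_cancel₀ Complex.I_ne_zero ?_
          rw [hI]; ring
        have : ((q:ℝ) * p x - (q:ℝ) * c : ℝ) = ((n : ℝ) * (2 * π) : ℝ) := by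
          exact_mod_cast hI2
        rw [mul_sub]; linarith
      obtain ⟨m, hm⟩ := hperiod 1 one_pos
      simp only [Rat.cast_one, one_mul] at hm
      by_cases hm0 : m = 0
      · rw [hm0] at hm; push_cast at hm; linarith
      · exfalso
        set q : ℚ := 1 / (2 * |m|) with hqdef
        have hqpos : 0 < q := by
          apply div_pos one_pos
          have : (0:ℤ) < |m| := abs_pos.mpr hm0
          positivity
        obtain ⟨n, hn⟩ := hperiod q hqpos
        rw [hm] at hn
        have hqval : (q : ℝ) = 1 / (2 * |(m:ℝ)|) := by
          rw [hqdef]; push_cast; simp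
        rw [hqval] at hn
        have habs : (0:ℝ) < |(m:ℝ)| := by
          simp [abs_pos]; exact_mod_cast hm0
        have hπ : (0:ℝ) < π := Real.pi_pos
        -- 1/(2|m|) * (m * 2π) = n * 2π  ⟹ m = 2 n |m|
        have hmn : (m : ℝ) = (n : ℝ) * (2 * |(m:ℝ)|) := by
          field_simp at hn
          nlinarith [hn]
        have hmnZ : m = n * (2 * |m|) := by
          exact_mod_cast hmn
        have h1 : |m| = 2 * |n| * |m| := by
          calc |m| = |n * (2 * |m|)| := by rw [← hmnZ]
            _ = |n| * (2 * |m|) := by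
                rw [abs_mul, abs_of_nonneg (by positivity : (0:ℤ) ≤ 2 * |m|)]
            _ = 2 * |n| * |m| := by ring
        have h2 : (1:ℤ) = 2 * |n| := by
          refine mul_right_cancel₀ (abs_ne_zero.mpr hm0) ?_
          rw [one_mul]; linarith [h1]
        have hdvd : (2:ℤ) ∣ 1 := ⟨|n|, h2⟩
        norm_num at hdvd
    set S : Set ℝ := p ⁻¹' {c} with hS
    have hSmeas : MeasurableSet S := hmeas (measurableSet_singleton c)
    have haeind : ∀ᵐ x : ℝ, p x = S.indicator (fun _ => c) x := by
      filter_upwards [hdichot] with x hx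
      rcases hx with hx | hx
      · rw [Set.indicator_of_notMem, hx]
        intro hmem
        rw [hS] at hmem
        simp only [Set.mem_preimage, Set.mem_singleton_iff] at hmem
        rw [hmem] at hx; exact absurd hx (ne_of_gt hcpos)
      · rw [Set.indicator_of_mem, hx]
        rw [hS]; simpa using hx
    have hind_int : Integrable (S.indicator (fun _ => c)) :=
      hp_int.congr haeind
    have hfin : volume S < ⊤ := by
      have := (integrable_indicator_iff hSmeas).mp hind_int
      rcases (integrableOn_const_iff (C := c)).mp this with h0 | h0
      · exact absurd (enorm_eq_zero.mp h0) (ne_of_gt hcpos)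
      · exact h0
    have hcS : c * (volume S).toReal = 1 := by
      have : ∫ x : ℝ, S.indicator (fun _ => c) x = (volume S).toReal • c :=
        integral_indicator_const c hSmeas
      rw [← hint, integral_congr_ae haeind, this, smul_eq_mul, mul_comm]
    exact ⟨c, S, hcpos, hSmeas, hfin, hcS, haeind⟩
  · rintro ⟨c, S, hc, hSmeas, hfin, hcS, hae⟩ β hβ
    unfold complexEntropy
    have hcongr : ∀ᵐ x : ℝ, (p x : ℂ) * Complex.exp ((β * p x : ℝ) * Complex.I) =
        S.indicator (fun _ => (c : ℂ) * Complex.exp ((β * c : ℝ) * Complex.I)) x := by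
      filter_upwards [hae] with x hx
      by_cases hmem : x ∈ S
      · rw [Set.indicator_of_mem hmem] at hx ⊢
        rw [hx]
      · rw [Set.indicator_of_notMem hmem] at hx ⊢
        rw [hx]; simp
    rw [integral_congr_ae hcongr, integral_indicator_const _ hSmeas]
    rw [Complex.real_smul, norm_mul, norm_mul, Complex.norm_real, Complex.norm_real,
      Complex.norm_exp_ofReal_mul_I, mul_one, Real.norm_eq_abs, Real.norm_eq_abs, abs_of_nonneg measureReal_nonneg,
      abs_of_nonneg hc.le, mul_comm]
    exact hcS
end

section
/- Continuity of complex entropy under total variation convergence: fix β > 0. Let p and p_1, p_2, … be probability densities on ℝ such that ∫_ℝ |p_n(x) − p(x)| dx → 0 as n → ∞. Then CE_β(p_n) → CE_β(p) as n → ∞. -/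
open MeasureTheory Real Filter

lemma expI_dist_le (s t : ℝ) :
    ‖Complex.exp ((s : ℂ) * Complex.I) - Complex.exp ((t : ℂ) * Complex.I)‖
      ≤ |s - t| := by
  have h := (lipschitzWith_circleMap 0 1).dist_le_mul s t
  simpa [circleMap, Complex.dist_eq, Real.dist_eq] using h

lemma abs_expI (t : ℝ) : ‖Complex.exp ((t : ℂ) * Complex.I)‖ = 1 := by
  simp [Complex.norm_exp]

lemma key_bound (β M : ℝ) (hβ : 0 ≤ β) (hM : 0 ≤ M) {a b : ℝ} (ha : 0 ≤ a) (hb : 0 ≤ b) :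
    ‖(a : ℂ) * Complex.exp (((β * a : ℝ) : ℂ) * Complex.I)
      - (b : ℂ) * Complex.exp (((β * b : ℝ) : ℂ) * Complex.I)‖
      ≤ (1 + β * M) * |a - b| + 2 * (b - min b M) := by
  set ea := Complex.exp (((β * a : ℝ) : ℂ) * Complex.I) with hea
  set eb := Complex.exp (((β * b : ℝ) : ℂ) * Complex.I) with heb
  have habs_ea : ‖ea‖ = 1 := abs_expI _
  have habs_eb : ‖eb‖ = 1 := abs_expI _
  have hsplit : (a : ℂ) * ea - (b : ℂ) * eb = ((a : ℂ) - b) * ea + (b : ℂ) * (ea - eb) := by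
    ring
  have h1 : ‖((a : ℂ) - b) * ea‖ = |a - b| := by
    rw [norm_mul, habs_ea, mul_one, ← Complex.ofReal_sub, Complex.norm_real, Real.norm_eq_abs]
  have hdist : ‖ea - eb‖ ≤ β * |a - b| := by
    have := expI_dist_le (β * a) (β * b)
    calc ‖ea - eb‖ ≤ |β * a - β * b| := by
          simpa [hea, heb] using this
      _ = β * |a - b| := by rw [← mul_sub, abs_mul, abs_of_nonneg hβ]
  have hdist2 : ‖ea - eb‖ ≤ 2 := by
    calc ‖ea - eb‖ ≤ ‖ea‖ + ‖eb‖ := by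
          simpa using norm_sub_le ea eb
      _ = 2 := by rw [habs_ea, habs_eb]; norm_num
  have hnn : 0 ≤ ‖ea - eb‖ := norm_nonneg _
  have h2 : ‖(b : ℂ) * (ea - eb)‖ ≤ M * (β * |a - b|) + (b - min b M) * 2 := by
    rw [norm_mul, Complex.norm_real, Real.norm_eq_abs, abs_of_nonneg hb]
    have hb' : b = min b M + (b - min b M) := by ring
    have hbm : 0 ≤ b - min b M := sub_nonneg.2 (min_le_left b M)
    have hmin0 : 0 ≤ min b M := le_min hb hM
    have t1 : min b M * ‖ea - eb‖ ≤ M * (β * |a - b|) :=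
      mul_le_mul (min_le_right _ _) hdist hnn hM
    have t2 : (b - min b M) * ‖ea - eb‖ ≤ (b - min b M) * 2 :=
      mul_le_mul_of_nonneg_left hdist2 hbm
    calc b * ‖ea - eb‖
        = min b M * ‖ea - eb‖ + (b - min b M) * ‖ea - eb‖ := by
          ring
      _ ≤ M * (β * |a - b|) + (b - min b M) * 2 := add_le_add t1 t2
  calc ‖(a : ℂ) * ea - (b : ℂ) * eb‖
      ≤ ‖((a : ℂ) - b) * ea‖ + ‖(b : ℂ) * (ea - eb)‖ := by
        rw [hsplit]; exact norm_add_le _ _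
    _ ≤ |a - b| + (M * (β * |a - b|) + (b - min b M) * 2) := by
        rw [h1]; gcongr
    _ = (1 + β * M) * |a - b| + 2 * (b - min b M) := by ring

/-- Continuity of complex entropy under total variation convergence: fix `β > 0`.
If probability densities `pₙ` converge to the probability density `p` in total
variation, i.e. `∫ |pₙ(x) − p(x)| dx → 0`, then `CE_β(pₙ) → CE_β(p)`. -/
theorem complexEntropy_continuous_of_tendsto_TV (β : ℝ) (hβ : 0 < β)
    (p : ℝ → ℝ) (hmeas : Measurable p) (hnonneg : ∀ x, 0 ≤ p x)
    (hint : ∫ x : ℝ, p x = 1)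
    (pseq : ℕ → ℝ → ℝ) (hmeasn : ∀ n, Measurable (pseq n))
    (hnonnegn : ∀ n x, 0 ≤ pseq n x) (hintn : ∀ n, ∫ x : ℝ, pseq n x = 1)
    (hTV : Tendsto (fun n => ∫ x : ℝ, |pseq n x - p x|) atTop (nhds 0)) :
    Tendsto (fun n => complexEntropy β (pseq n)) atTop (nhds (complexEntropy β p)) := by
  -- integrability of p and pseq n
  have hpint : Integrable p := by
    by_contra h
    rw [integral_undef h] at hint
    norm_num at hint
  have hpnint : ∀ n, Integrable (pseq n) := by
    intro n
    by_contra h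
    have := hintn n
    rw [integral_undef h] at this
    norm_num at this
  -- the complex integrands
  set f : (ℝ → ℝ) → ℝ → ℂ :=
    fun q x => (q x : ℂ) * Complex.exp (((β * q x : ℝ) : ℂ) * Complex.I) with hf
  have hfmeas : ∀ q : ℝ → ℝ, Measurable q → Measurable (f q) := by
    intro q hq
    exact (Complex.measurable_ofReal.comp hq).mul
      (Complex.measurable_exp.comp
        ((Complex.measurable_ofReal.comp (hq.const_mul β)).mul measurable_const))
  have hfnorm : ∀ (q : ℝ → ℝ), (∀ x, 0 ≤ q x) → ∀ x, ‖f q x‖ = q x := by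
    intro q hq x
    rw [norm_mul, abs_expI, mul_one,
      Complex.norm_real, Real.norm_eq_abs, abs_of_nonneg (hq x)]
  have hfint : ∀ q : ℝ → ℝ, Measurable q → (∀ x, 0 ≤ q x) → Integrable q → Integrable (f q) := by
    intro q hq hq0 hqi
    refine hqi.mono' ((hfmeas q hq).aestronglyMeasurable) ?_
    filter_upwards with x
    rw [hfnorm q hq0 x]
  have hFint : Integrable (f p) := hfint p hmeas hnonneg hpint
  have hFnint : ∀ n, Integrable (f (pseq n)) := fun n =>
    hfint _ (hmeasn n) (hnonnegn n) (hpnint n)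
  have hdint : ∀ n, Integrable (fun x => |pseq n x - p x|) := fun n =>
    ((hpnint n).sub hpint).abs
  -- truncation tail tends to 0
  have hminint : ∀ k : ℕ, Integrable (fun x => min (p x) (k : ℝ)) := by
    intro k
    refine hpint.mono' ((hmeas.min measurable_const).aestronglyMeasurable) ?_
    filter_upwards with x
    rw [Real.norm_eq_abs, abs_of_nonneg (le_min (hnonneg x) (Nat.cast_nonneg k))]
    exact min_le_left _ _
  have htail : Tendsto (fun k : ℕ => ∫ x : ℝ, (p x - min (p x) (k : ℝ))) atTop (nhds 0) := by
    have h0 : (0 : ℝ) = ∫ x : ℝ, (0 : ℝ) := by simp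
    rw [h0]
    refine tendsto_integral_of_dominated_convergence p
      (fun k => (hpint.sub (hminint k)).aestronglyMeasurable) hpint ?_ ?_
    · intro k
      filter_upwards with x
      rw [Real.norm_eq_abs, abs_of_nonneg (by simp [min_le_left])]
      simp [le_min (hnonneg x) (Nat.cast_nonneg k)]
    · filter_upwards with x
      have hev : (fun k : ℕ => p x - min (p x) (k : ℝ)) =ᶠ[atTop] (fun _ => (0:ℝ)) := by
        filter_upwards [eventually_ge_atTop (Nat.ceil (p x))] with k hk
        have : p x ≤ (k : ℝ) := le_trans (Nat.le_ceil _) (by exact_mod_cast hk)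
        simp [min_eq_left this]
      exact Tendsto.congr' hev.symm tendsto_const_nhds
  -- epsilon argument
  rw [Metric.tendsto_atTop]
  intro ε hε
  obtain ⟨k, hk⟩ := (htail.eventually (gt_mem_nhds (by positivity : (0:ℝ) < ε/4))).exists
  set M : ℝ := (k : ℝ) with hMdef
  have hM0 : 0 ≤ M := Nat.cast_nonneg k
  set C : ℝ := 1 + β * M with hC
  have hC0 : 0 < C := by positivity
  have hgint : Integrable (fun x => p x - min (p x) M) := hpint.sub (hminint k)
  have hTV' := (Metric.tendsto_atTop.mp hTV) (ε / (2 * C)) (by positivity)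
  obtain ⟨N, hN⟩ := hTV'
  refine ⟨N, fun n hn => ?_⟩
  have hTVn : ∫ x : ℝ, |pseq n x - p x| < ε / (2 * C) := by
    have := hN n hn
    rwa [Real.dist_eq, sub_zero,
      abs_of_nonneg (integral_nonneg (fun x => abs_nonneg _))] at this
  -- main chain of inequalities
  have hchain : dist (complexEntropy β (pseq n)) (complexEntropy β p)
      ≤ C * (∫ x : ℝ, |pseq n x - p x|) + 2 * ∫ x : ℝ, (p x - min (p x) M) := by
    rw [Real.dist_eq]
    unfold complexEntropy
    have step1 : |‖∫ x : ℝ, f (pseq n) x‖ - ‖∫ x : ℝ, f p x‖|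
        ≤ ‖(∫ x : ℝ, f (pseq n) x) - ∫ x : ℝ, f p x‖ := by
      simpa [Real.norm_eq_abs] using
        abs_norm_sub_norm_le (∫ x : ℝ, f (pseq n) x) (∫ x : ℝ, f p x)
    have step2 : ‖(∫ x : ℝ, f (pseq n) x) - ∫ x : ℝ, f p x‖
        ≤ ∫ x : ℝ, ‖f (pseq n) x - f p x‖ := by
      rw [← integral_sub (hFnint n) hFint]
      exact norm_integral_le_integral_norm _
    have step3 : ∫ x : ℝ, ‖f (pseq n) x - f p x‖
        ≤ ∫ x : ℝ, (C * |pseq n x - p x| + 2 * (p x - min (p x) M)) := by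
      refine integral_mono ((hFnint n).sub hFint).norm
        (((hdint n).const_mul C).add (hgint.const_mul 2)) ?_
      intro x
      simp only [hf, hC]
      exact key_bound β M hβ.le hM0 (hnonnegn n x) (hnonneg x)
    have step4 : ∫ x : ℝ, (C * |pseq n x - p x| + 2 * (p x - min (p x) M))
        = C * (∫ x : ℝ, |pseq n x - p x|) + 2 * ∫ x : ℝ, (p x - min (p x) M) := by
      rw [integral_add ((hdint n).const_mul C) (hgint.const_mul 2),
        integral_const_mul, integral_const_mul]
    calc |‖∫ x : ℝ, f (pseq n) x‖ - ‖∫ x : ℝ, f p x‖|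
        ≤ ∫ x : ℝ, ‖f (pseq n) x - f p x‖ := le_trans step1 step2
      _ ≤ _ := step3
      _ = _ := step4
  have hbound1 : C * (∫ x : ℝ, |pseq n x - p x|) < ε / 2 := by
    have := mul_lt_mul_of_pos_left hTVn hC0
    calc C * (∫ x : ℝ, |pseq n x - p x|) < C * (ε / (2 * C)) := this
      _ = ε / 2 := by field_simp
  have hbound2 : 2 * (∫ x : ℝ, (p x - min (p x) M)) < ε / 2 := by
    have : (∫ x : ℝ, (p x - min (p x) M)) < ε / 4 := hk
    linarith
  have hlt := lt_of_le_of_lt hchain (add_lt_add hbound1 hbound2)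
  linarith
end

section
/- Monotonicity of complex entropy under downscaling of the phase parameter: let q be a probability density on ℝ and β > 0 satisfy β q(x) < π for all x. Then for every γ ∈ (0, 1], CE_{γβ}(q) ≥ CE_β(q). Moreover, equality holds for some γ ∈ (0,1) if and only if q is constant (Lebesgue-almost everywhere) on its support {x : q(x) > 0}. -/
open MeasureTheory Real Filter

lemma CE_fmeas (q : ℝ → ℝ) (hmeas : Measurable q) (b : ℝ) :
    Measurable (fun x => (q x : ℂ) * Complex.exp ((b * q x : ℝ) * Complex.I)) := by
  have h1 : Measurable (fun x => ((q x : ℝ) : ℂ)) := Complex.measurable_ofReal.comp hmeas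
  have h2 : Measurable (fun x => ((b * q x : ℝ) : ℂ)) :=
    Complex.measurable_ofReal.comp (measurable_const.mul hmeas)
  exact h1.mul ((h2.mul_const Complex.I).cexp)

lemma CE_fint (q : ℝ → ℝ) (hmeas : Measurable q) (hnonneg : ∀ x, 0 ≤ q x) (hq : Integrable q)
    (b : ℝ) : Integrable (fun x => (q x : ℂ) * Complex.exp ((b * q x : ℝ) * Complex.I)) := by
  refine Integrable.mono' hq ((CE_fmeas q hmeas b).aestronglyMeasurable) ?_
  filter_upwards with x
  simp only [norm_mul, Complex.norm_real, Real.norm_eq_abs, Complex.norm_exp_ofReal_mul_I,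
    mul_one, abs_of_nonneg (hnonneg x), le_refl]

lemma CE_gint (q : ℝ → ℝ) (hmeas : Measurable q) (hnonneg : ∀ x, 0 ≤ q x) (hq : Integrable q)
    (b : ℝ) : Integrable
    (fun z : ℝ × ℝ => q z.1 * q z.2 * Real.cos (b * (q z.1 - q z.2))) (volume.prod volume) := by
  refine Integrable.mono' (hq.mul_prod hq) ?_ ?_
  · exact (((hmeas.comp measurable_fst).mul (hmeas.comp measurable_snd)).mul
      ((measurable_const.mul ((hmeas.comp measurable_fst).sub
        (hmeas.comp measurable_snd))).cos)).aestronglyMeasurable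
  · filter_upwards with z
    rw [Real.norm_eq_abs, abs_mul]
    calc |q z.1 * q z.2| * |Real.cos (b * (q z.1 - q z.2))| ≤ |q z.1 * q z.2| * 1 := by
          gcongr; exact Real.abs_cos_le_one _
      _ = q z.1 * q z.2 := by
          rw [mul_one, abs_of_nonneg (mul_nonneg (hnonneg _) (hnonneg _))]

lemma CE_key (q : ℝ → ℝ) (hmeas : Measurable q) (hnonneg : ∀ x, 0 ≤ q x) (hq : Integrable q)
    (b : ℝ) : (complexEntropy b q)^2
    = ∫ z : ℝ × ℝ, q z.1 * q z.2 * Real.cos (b * (q z.1 - q z.2)) ∂(volume.prod volume) := by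
  set f : ℝ → ℂ := fun x => (q x : ℂ) * Complex.exp ((b * q x : ℝ) * Complex.I) with hf
  have hpt : ∀ x y : ℝ, (f x * (starRingEnd ℂ) (f y)).re
      = q x * q y * Real.cos (b * (q x - q y)) := by
    intro x y
    simp only [hf, Complex.mul_re, Complex.mul_im, map_mul, Complex.conj_re, Complex.conj_im,
      Complex.ofReal_re, Complex.ofReal_im, Complex.exp_ofReal_mul_I_re,
      Complex.exp_ofReal_mul_I_im, mul_sub, Real.cos_sub]
    ring
  have hprodint : Integrable (fun z : ℝ × ℝ => f z.1 * (starRingEnd ℂ) (f z.2))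
      (volume.prod volume) := by
    have h := CE_fint q hmeas hnonneg hq b
    have hc : Integrable (fun x => (starRingEnd ℂ) (f x)) := by
      refine Integrable.mono' h.norm (Complex.continuous_conj.comp_aestronglyMeasurable h.1) ?_
      filter_upwards with x
      rw [RCLike.norm_conj]
    exact h.mul_prod hc
  have h2 : (complexEntropy b q)^2 = ((∫ x, f x) * (starRingEnd ℂ) (∫ x, f x)).re := by
    rw [Complex.mul_conj]
    simp [complexEntropy, Complex.sq_norm, hf]
  rw [h2, ← integral_conj, ← integral_prod_mul]
  rw [← RCLike.re_eq_complex_re, ← integral_re hprodint]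
  exact integral_congr_ae (Filter.Eventually.of_forall fun z => by
    rw [RCLike.re_eq_complex_re]; exact (hpt z.1 z.2).symm) |>.symm

lemma CE_ptle (q : ℝ → ℝ) (hnonneg : ∀ x, 0 ≤ q x) (β b : ℝ) (hβ : 0 < β) (hb : 0 < b)
    (hble : b ≤ β) (hbound : ∀ x, β * q x < π) (x y : ℝ) :
    q x * q y * Real.cos (β * (q x - q y)) ≤ q x * q y * Real.cos (b * (q x - q y)) := by
  refine mul_le_mul_of_nonneg_left ?_ (mul_nonneg (hnonneg x) (hnonneg y))
  have habs : |β * (q x - q y)| ≤ π := by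
    rw [abs_le]
    constructor <;> nlinarith [hbound x, hbound y, hnonneg x, hnonneg y,
      mul_nonneg hβ.le (hnonneg x), mul_nonneg hβ.le (hnonneg y)]
  rw [← Real.cos_abs (β * _), ← Real.cos_abs (b * _)]
  refine Real.cos_le_cos_of_nonneg_of_le_pi (abs_nonneg _) habs ?_
  rw [abs_mul, abs_mul]
  exact mul_le_mul_of_nonneg_right (by rw [abs_of_pos hb, abs_of_pos hβ]; exact hble)
    (abs_nonneg _)

lemma CE_ptlt (q : ℝ → ℝ) (hnonneg : ∀ x, 0 ≤ q x) (β b : ℝ) (hβ : 0 < β) (hb : 0 < b)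
    (hblt : b < β) (hbound : ∀ x, β * q x < π) (x y : ℝ) (hx : 0 < q x) (hy : 0 < q y)
    (hne : q x ≠ q y) :
    q x * q y * Real.cos (β * (q x - q y)) < q x * q y * Real.cos (b * (q x - q y)) := by
  refine mul_lt_mul_of_pos_left ?_ (mul_pos hx hy)
  have habs : |β * (q x - q y)| ≤ π := by
    rw [abs_le]
    constructor <;> nlinarith [hbound x, hbound y, hnonneg x, hnonneg y,
      mul_nonneg hβ.le (hnonneg x), mul_nonneg hβ.le (hnonneg y)]
  rw [← Real.cos_abs (β * _), ← Real.cos_abs (b * _)]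
  refine Real.cos_lt_cos_of_nonneg_of_le_pi (abs_nonneg _) habs ?_
  rw [abs_mul, abs_mul]
  have hd : 0 < |q x - q y| := abs_pos.2 (sub_ne_zero.2 hne)
  exact mul_lt_mul_of_pos_right (by rw [abs_of_pos hb, abs_of_pos hβ]; exact hblt) hd

lemma CE_eq_one (q : ℝ → ℝ) (hnonneg : ∀ x, 0 ≤ q x) (hint : ∫ x : ℝ, q x = 1)
    (c : ℝ) (hc : ∀ᵐ x : ℝ ∂volume, 0 < q x → q x = c) (b : ℝ) :
    complexEntropy b q = 1 := by
  have h : (fun x => (q x : ℂ) * Complex.exp ((b * q x : ℝ) * Complex.I))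
      =ᵐ[volume] fun x => (q x : ℂ) * Complex.exp ((b * c : ℝ) * Complex.I) := by
    filter_upwards [hc] with x hx
    rcases eq_or_lt_of_le (hnonneg x) with h0 | h0
    · rw [← h0]; simp
    · rw [hx h0]
  rw [complexEntropy, integral_congr_ae h, integral_mul_const]
  have h1 : (∫ (a : ℝ), ((q a : ℝ) : ℂ)) = ((1:ℝ):ℂ) := by
    have h2 := Complex.ofRealLI.integral_comp_comm (μ := volume) q
    simp only [Complex.ofRealLI] at h2
    rw [hint] at h2
    exact h2
  rw [h1]
  simp [Complex.norm_exp]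

/-- Monotonicity of complex entropy under downscaling of the phase parameter: if `q`
is a probability density on `ℝ` with `β q(x) < π` for all `x`, then for every
`γ ∈ (0, 1]` we have `CE_{γβ}(q) ≥ CE_β(q)`; moreover equality holds for some
`γ ∈ (0,1)` if and only if `q` is constant (a.e.) on its support `{x : q x > 0}`. -/
theorem complexEntropy_monotone_scaling (q : ℝ → ℝ) (hmeas : Measurable q)
    (hnonneg : ∀ x, 0 ≤ q x) (hint : ∫ x : ℝ, q x = 1)
    (β : ℝ) (hβ : 0 < β) (hbound : ∀ x, β * q x < π) :
    (∀ γ : ℝ, γ ∈ Set.Ioc (0 : ℝ) 1 → complexEntropy β q ≤ complexEntropy (γ * β) q) ∧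
    ((∃ γ ∈ Set.Ioo (0 : ℝ) 1, complexEntropy (γ * β) q = complexEntropy β q) ↔
      ∃ c : ℝ, ∀ᵐ x : ℝ ∂volume, 0 < q x → q x = c) := by
  have hq : Integrable q := by
    by_contra h
    rw [integral_undef h] at hint
    norm_num at hint
  constructor
  · intro γ hγ
    have hb : 0 < γ * β := mul_pos hγ.1 hβ
    have hble : γ * β ≤ β := by nlinarith [hγ.2, hβ]
    have hsq : (complexEntropy β q)^2 ≤ (complexEntropy (γ * β) q)^2 := by
      rw [CE_key q hmeas hnonneg hq β, CE_key q hmeas hnonneg hq (γ * β)]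
      exact integral_mono (CE_gint q hmeas hnonneg hq β) (CE_gint q hmeas hnonneg hq (γ * β))
        (fun z => CE_ptle q hnonneg β (γ * β) hβ hb hble hbound z.1 z.2)
    have h1 : 0 ≤ complexEntropy β q := norm_nonneg _
    have h2 : 0 ≤ complexEntropy (γ * β) q := norm_nonneg _
    nlinarith
  constructor
  · rintro ⟨γ, hγ, heq⟩
    set b := γ * β with hbdef
    have hb : 0 < b := mul_pos hγ.1 hβ
    have hblt : b < β := by nlinarith [hγ.2, hβ]
    have hFeq : (∫ z : ℝ × ℝ, q z.1 * q z.2 * Real.cos (b * (q z.1 - q z.2))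
          ∂(volume.prod volume))
        = ∫ z : ℝ × ℝ, q z.1 * q z.2 * Real.cos (β * (q z.1 - q z.2)) ∂(volume.prod volume) := by
      rw [← CE_key q hmeas hnonneg hq b, ← CE_key q hmeas hnonneg hq β, heq]
    have hzero : ∫ z : ℝ × ℝ, (q z.1 * q z.2 * Real.cos (b * (q z.1 - q z.2))
        - q z.1 * q z.2 * Real.cos (β * (q z.1 - q z.2))) ∂(volume.prod volume) = 0 := by
      rw [integral_sub (CE_gint q hmeas hnonneg hq b) (CE_gint q hmeas hnonneg hq β), hFeq,
        sub_self]
    have haez := (integral_eq_zero_iff_of_nonneg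
      (fun (z : ℝ × ℝ) => sub_nonneg.2 (CE_ptle q hnonneg β b hβ hb hblt.le hbound z.1 z.2))
      ((CE_gint q hmeas hnonneg hq b).sub (CE_gint q hmeas hnonneg hq β))).1 hzero
    have hae : ∀ᵐ z : ℝ × ℝ ∂(volume.prod volume), 0 < q z.1 → 0 < q z.2 → q z.1 = q z.2 := by
      filter_upwards [haez] with z hz hx hy
      by_contra hne
      have hlt := CE_ptlt q hnonneg β b hβ hb hblt hbound z.1 z.2 hx hy hne
      simp only [Pi.zero_apply] at hz
      linarith [sub_eq_zero.1 hz]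
    have h2 := Measure.ae_ae_of_ae_prod hae
    have hS : ∃ᶠ x in ae (volume : Measure ℝ), 0 < q x := by
      intro hcon
      have hq0 : ∀ᵐ x : ℝ ∂volume, q x = 0 := by
        filter_upwards [hcon] with x hx
        exact le_antisymm (not_lt.1 hx) (hnonneg x)
      have : ∫ x : ℝ, q x = 0 := by
        rw [integral_congr_ae hq0, integral_zero]
      rw [hint] at this
      norm_num at this
    obtain ⟨x₀, hx₀prop, hx₀pos⟩ := (h2.and_frequently hS).exists
    refine ⟨q x₀, ?_⟩
    filter_upwards [hx₀prop] with y hy hypos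
    exact (hy hx₀pos hypos).symm
  · rintro ⟨c, hc⟩
    exact ⟨1/2, by norm_num, by
      rw [CE_eq_one q hnonneg hint c hc, CE_eq_one q hnonneg hint c hc]⟩
end

section
/- Mixing effect for complex entropy: let p₁, p₂ be probability densities on ℝ whose supports S₁ = {x : p₁(x) > 0} and S₂ = {x : p₂(x) > 0} are disjoint, let α ∈ (0,1), and let p = α p₁ + (1−α) p₂. Then for every β > 0, CE_β(p) ≤ α · CE_{αβ}(p₁) + (1−α) · CE_{(1−α)β}(p₂). -/
open MeasureTheory Real Filter

set_option maxHeartbeats 1000000 in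
/-- Mixing effect for complex entropy: if `p₁, p₂` are probability densities on `ℝ`
with disjoint supports and `p = α p₁ + (1−α) p₂` with `α ∈ (0,1)`, then for every
`β > 0`, `CE_β(p) ≤ α CE_{αβ}(p₁) + (1−α) CE_{(1−α)β}(p₂)`. -/
theorem complexEntropy_mixing (p₁ p₂ : ℝ → ℝ)
    (hmeas₁ : Measurable p₁) (hnonneg₁ : ∀ x, 0 ≤ p₁ x) (hint₁ : ∫ x : ℝ, p₁ x = 1)
    (hmeas₂ : Measurable p₂) (hnonneg₂ : ∀ x, 0 ≤ p₂ x) (hint₂ : ∫ x : ℝ, p₂ x = 1)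
    (hdisj : Disjoint {x : ℝ | 0 < p₁ x} {x : ℝ | 0 < p₂ x})
    (α : ℝ) (hα : α ∈ Set.Ioo (0 : ℝ) 1) (β : ℝ) (hβ : 0 < β) :
    complexEntropy β (fun x => α * p₁ x + (1 - α) * p₂ x) ≤
      α * complexEntropy (α * β) p₁ + (1 - α) * complexEntropy ((1 - α) * β) p₂ := by
  obtain ⟨hα0, hα1⟩ := hα
  set g₁ : ℝ → ℂ := fun x => (p₁ x : ℂ) * Complex.exp ((α * β * p₁ x : ℝ) * Complex.I) with hg₁def
  set g₂ : ℝ → ℂ := fun x => (p₂ x : ℂ) * Complex.exp (((1 - α) * β * p₂ x : ℝ) * Complex.I)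
    with hg₂def
  have hp₁ : Integrable p₁ := by
    by_contra h
    rw [integral_undef h] at hint₁; norm_num at hint₁
  have hp₂ : Integrable p₂ := by
    by_contra h
    rw [integral_undef h] at hint₂; norm_num at hint₂
  have hg₁ : Integrable g₁ := by
    apply hp₁.mono'
    · apply Measurable.aestronglyMeasurable
      fun_prop
    · filter_upwards with x
      rw [hg₁def]
      simp only [norm_mul, Real.norm_eq_abs, Complex.norm_real,
        Complex.norm_exp_ofReal_mul_I, mul_one, abs_of_nonneg (hnonneg₁ x), le_refl]
  have hg₂ : Integrable g₂ := by
    apply hp₂.mono'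
    · apply Measurable.aestronglyMeasurable
      fun_prop
    · filter_upwards with x
      rw [hg₂def]
      simp only [norm_mul, Real.norm_eq_abs, Complex.norm_real,
        Complex.norm_exp_ofReal_mul_I, mul_one, abs_of_nonneg (hnonneg₂ x), le_refl]
  have key : (fun x : ℝ => ((α * p₁ x + (1 - α) * p₂ x : ℝ) : ℂ) *
      Complex.exp ((β * (α * p₁ x + (1 - α) * p₂ x) : ℝ) * Complex.I)) =
      fun x => (α : ℂ) * g₁ x + ((1 - α : ℝ) : ℂ) * g₂ x := by
    funext x
    rcases eq_or_lt_of_le (hnonneg₁ x) with h1 | h1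
    · simp only [hg₁def, hg₂def, ← h1]
      push_cast
      ring_nf
    · have h2 : p₂ x = 0 :=
        le_antisymm (not_lt.mp (Set.disjoint_left.mp hdisj h1)) (hnonneg₂ x)
      simp only [hg₁def, hg₂def, h2]
      push_cast
      ring_nf
  unfold complexEntropy
  rw [key, integral_add (hg₁.const_mul _) (hg₂.const_mul _), integral_const_mul,
    integral_const_mul]
  refine le_trans (norm_add_le _ _) ?_
  rw [norm_mul, norm_mul, Complex.norm_real, Complex.norm_real, Real.norm_eq_abs, Real.norm_eq_abs,
    abs_of_pos hα0, abs_of_pos (by linarith : (0:ℝ) < 1 - α)]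
end

section
/- Identity of indiscernibles for the complex metric: for any probability densities p, q on ℝ and any β > 0, CM_β(p, q) ≥ 0, and CM_β(p, q) = 0 if and only if p(x) = q(x) for Lebesgue-almost every x ∈ ℝ. -/
open MeasureTheory Real Filter

/-- The complex metric between two probability densities `p, q` on `ℝ` with
parameter `β`: `CM_β(p, q) = (1/2) ∫ |p(x) e^{iβ p(x)} − q(x) e^{iβ q(x)}| dx`. -/
noncomputable def complexMetric (β : ℝ) (p q : ℝ → ℝ) : ℝ :=
  (1 / 2) * ∫ x : ℝ, ‖
    ((p x : ℂ) * Complex.exp ((β * p x : ℝ) * Complex.I) -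
     (q x : ℂ) * Complex.exp ((β * q x : ℝ) * Complex.I))‖

/-- Identity of indiscernibles for the complex metric: `CM_β(p, q) ≥ 0`, and
`CM_β(p, q) = 0` if and only if `p = q` Lebesgue-almost everywhere. -/
theorem complexMetric_nonneg_eq_zero_iff (p q : ℝ → ℝ)
    (hmeasp : Measurable p) (hnonnegp : ∀ x, 0 ≤ p x) (hintp : ∫ x : ℝ, p x = 1)
    (hmeasq : Measurable q) (hnonnegq : ∀ x, 0 ≤ q x) (hintq : ∫ x : ℝ, q x = 1)
    (β : ℝ) (hβ : 0 < β) :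
    0 ≤ complexMetric β p q ∧
    (complexMetric β p q = 0 ↔ ∀ᵐ x : ℝ ∂volume, p x = q x) := by
  set F : ℝ → ℝ := fun x => ‖
    ((p x : ℂ) * Complex.exp ((β * p x : ℝ) * Complex.I) -
     (q x : ℂ) * Complex.exp ((β * q x : ℝ) * Complex.I))‖ with hF
  have hip : Integrable p := by
    by_contra h
    rw [integral_undef h] at hintp; norm_num at hintp
  have hiq : Integrable q := by
    by_contra h
    rw [integral_undef h] at hintq; norm_num at hintq
  have hFmeas : Measurable F := by
    apply Measurable.comp continuous_norm.measurable
    exact ((Complex.measurable_ofReal.comp hmeasp).mul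
      (Complex.measurable_exp.comp ((Complex.measurable_ofReal.comp
        (hmeasp.const_mul β)).mul measurable_const))).sub
      ((Complex.measurable_ofReal.comp hmeasq).mul
      (Complex.measurable_exp.comp ((Complex.measurable_ofReal.comp
        (hmeasq.const_mul β)).mul measurable_const)))
  have hFbound : ∀ x, F x ≤ p x + q x := by
    intro x
    calc F x ≤ ‖((p x : ℂ) * Complex.exp ((β * p x : ℝ) * Complex.I))‖
        + ‖((q x : ℂ) * Complex.exp ((β * q x : ℝ) * Complex.I))‖ := by
          exact norm_sub_le _ _
      _ = p x + q x := by
          simp [Complex.norm_exp, Complex.norm_real,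
            abs_of_nonneg (hnonnegp x), abs_of_nonneg (hnonnegq x)]
  have hFnonneg : ∀ x, 0 ≤ F x := fun x => norm_nonneg _
  have hFint : Integrable F := by
    refine (hip.add hiq).mono hFmeas.aestronglyMeasurable ?_
    filter_upwards with x
    rw [Real.norm_eq_abs, Real.norm_eq_abs, Pi.add_apply, abs_of_nonneg (hFnonneg x),
      abs_of_nonneg (add_nonneg (hnonnegp x) (hnonnegq x))]
    exact hFbound x
  constructor
  · exact mul_nonneg (by norm_num) (integral_nonneg hFnonneg)
  · unfold complexMetric
    rw [mul_eq_zero]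
    simp only [one_div, inv_eq_zero, OfNat.ofNat_ne_zero, false_or]
    rw [integral_eq_zero_iff_of_nonneg hFnonneg hFint]
    constructor
    · intro h
      filter_upwards [h] with x hx
      have hx0 : F x = 0 := hx
      rw [hF] at hx0
      simp only [norm_eq_zero, sub_eq_zero] at hx0
      have := congrArg (‖·‖) hx0
      rwa [norm_mul, norm_mul, Complex.norm_exp_ofReal_mul_I,
        Complex.norm_exp_ofReal_mul_I, Complex.norm_real, Complex.norm_real,
        Real.norm_eq_abs, Real.norm_eq_abs,
        abs_of_nonneg (hnonnegp x), abs_of_nonneg (hnonnegq x),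
        mul_one, mul_one] at this
    · intro h
      filter_upwards [h] with x hx
      show F x = 0
      rw [hF]
      simp [hx]
end

section
/- Small-β limit of the complex metric recovers total variation: for any probability densities p, q on ℝ, CM_β(p, q) → (1/2) ∫_ℝ |p(x) − q(x)| dx as β → 0⁺; the limit is the total variation distance between the corresponding distributions. -/
open MeasureTheory Real Filter

/-- Small-`β` limit of the complex metric recovers the total variation distance:
`CM_β(p, q) → (1/2) ∫ |p(x) − q(x)| dx` as `β → 0⁺`. -/
theorem complexMetric_tendsto_totalVariation (p q : ℝ → ℝ)
    (hmeasp : Measurable p) (hnonnegp : ∀ x, 0 ≤ p x) (hintp : ∫ x : ℝ, p x = 1)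
    (hmeasq : Measurable q) (hnonnegq : ∀ x, 0 ≤ q x) (hintq : ∫ x : ℝ, q x = 1) :
    Tendsto (fun β : ℝ => complexMetric β p q) (nhdsWithin 0 (Set.Ioi 0))
      (nhds ((1 / 2) * ∫ x : ℝ, |p x - q x|)) := by
  have hip : Integrable p := by
    by_contra h; rw [integral_undef h] at hintp; norm_num at hintp
  have hiq : Integrable q := by
    by_contra h; rw [integral_undef h] at hintq; norm_num at hintq
  have key : Tendsto (fun β : ℝ => ∫ x : ℝ, ‖
      ((p x : ℂ) * Complex.exp ((β * p x : ℝ) * Complex.I) -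
       (q x : ℂ) * Complex.exp ((β * q x : ℝ) * Complex.I))‖)
      (nhdsWithin 0 (Set.Ioi 0)) (nhds (∫ x : ℝ, |p x - q x|)) := by
    apply tendsto_integral_filter_of_dominated_convergence (fun x => p x + q x)
    · filter_upwards with β
      exact (continuous_norm.measurable.comp (by fun_prop)).aestronglyMeasurable
    · filter_upwards with β
      filter_upwards with x
      have h1 : ‖(p x : ℂ) * Complex.exp ((β * p x : ℝ) * Complex.I)‖ = p x := by
        rw [norm_mul, Complex.norm_exp_ofReal_mul_I, Complex.norm_real, Real.norm_eq_abs,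
          abs_of_nonneg (hnonnegp x), mul_one]
      have h2 : ‖(q x : ℂ) * Complex.exp ((β * q x : ℝ) * Complex.I)‖ = q x := by
        rw [norm_mul, Complex.norm_exp_ofReal_mul_I, Complex.norm_real, Real.norm_eq_abs,
          abs_of_nonneg (hnonnegq x), mul_one]
      rw [Real.norm_eq_abs, abs_of_nonneg (norm_nonneg _)]
      calc ‖_‖ ≤ _ + _ := norm_sub_le _ _
        _ = p x + q x := by rw [h1, h2]
    · exact hip.add hiq
    · filter_upwards with x
      have hc : ContinuousAt (fun β : ℝ => ‖
          ((p x : ℂ) * Complex.exp ((β * p x : ℝ) * Complex.I) -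
           (q x : ℂ) * Complex.exp ((β * q x : ℝ) * Complex.I))‖) 0 :=
        (continuous_norm.comp (by fun_prop)).continuousAt
      have := hc.tendsto.mono_left (nhdsWithin_le_nhds (s := Set.Ioi 0))
      simpa [Complex.norm_real, ← Complex.ofReal_sub] using this
  simpa [complexMetric] using key.const_mul (1 / 2 : ℝ)
end
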